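/- arXiv:1911.07396 — 2 statements merged into one kernel-verified Lean document; each statement's English description precedes it below -/
import Mathlib

section
/- The function ψ(t) = (64/35)t^{1/2} - 2t² + (8/5)t³ - (3/7)t⁴ satisfies ψ(t) > 0, ψ'(t) > 0, ψ''(t) < 0, and ψ'''(t) > 0 for all t in the open interval (0,1). -/
/-!
Write `t = s ^ 2` with `s = √t ∈ (0, 1)`. Since `√t = t ^ (1 / 2)`, the power rule gives the
`n`-th derivative of `ψ` at `s ^ 2` as a polynomial in `s` divided by `35 s ^ (2n - 1)`. Each
numerator is visibly positive once written in terms of `1 - s`: three of them are a power of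
`1 - s` times a polynomial with positive coefficients, and
`64 - 70 s³ + 56 s⁵ - 15 s⁷ = 35 + 29 (1 - s) + s (1 - s) (1 + s) (15 s⁴ - 41 s² + 29)`,
where the last factor has negative discriminant as a quadratic in `s²`.
-/

noncomputable def psi : ℝ → ℝ :=
  fun t => 64 / 35 * Real.sqrt t - 2 * t ^ 2 + 8 / 5 * t ^ 3 - 3 / 7 * t ^ 4

open Real

lemma psi_eq_rpow :
    psi = fun t => 64 / 35 * t ^ (1 / 2 : ℝ) - 2 * t ^ 2 + 8 / 5 * t ^ 3 - 3 / 7 * t ^ 4 := by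
  funext t
  rw [psi, sqrt_eq_rpow]

lemma iteratedDeriv_psi (n : ℕ) {t : ℝ} (ht : t ≠ 0) :
    iteratedDeriv n psi t =
      64 / 35 * (descPochhammer ℝ n).eval (1 / 2) * t ^ (1 / 2 - n : ℝ)
        - 2 * (2).descFactorial n * t ^ (2 - n) + 8 / 5 * (3).descFactorial n * t ^ (3 - n)
        - 3 / 7 * (4).descFactorial n * t ^ (4 - n) := by
  rw [psi_eq_rpow, iteratedDeriv_fun_sub (by fun_prop) (by fun_prop),
    iteratedDeriv_fun_add (by fun_prop) (by fun_prop),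
    iteratedDeriv_fun_sub (by fun_prop) (by fun_prop)]
  simp only [iteratedDeriv_const_mul_field, iteratedDeriv_pow, iteratedDeriv_eq_iterate,
    iter_deriv_rpow_const]
  ring

lemma rpow_half_sub_natCast {t : ℝ} (ht : 0 < t) (n : ℕ) :
    t ^ (1 / 2 - n : ℝ) = √t / t ^ n := by
  rw [rpow_sub ht, rpow_natCast, ← sqrt_eq_rpow]

section
variable {s : ℝ} (hs : 0 < s)
include hs

lemma iter_deriv_psi_sq (n : ℕ) :
    deriv^[n] psi (s ^ 2) =
      64 / 35 * (descPochhammer ℝ n).eval (1 / 2) * s / s ^ (2 * n)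
        - 2 * (2).descFactorial n * s ^ (2 * (2 - n))
        + 8 / 5 * (3).descFactorial n * s ^ (2 * (3 - n))
        - 3 / 7 * (4).descFactorial n * s ^ (2 * (4 - n)) := by
  rw [← iteratedDeriv_eq_iterate, iteratedDeriv_psi n (by positivity),
    rpow_half_sub_natCast (by positivity), sqrt_sq hs.le]
  ring

lemma psi_sq : psi (s ^ 2) = s * (64 - 70 * s ^ 3 + 56 * s ^ 5 - 15 * s ^ 7) / 35 := by
  rw [psi, sqrt_sq hs.le]
  ring

lemma deriv_psi_sq :
    deriv psi (s ^ 2) = (32 - 140 * s ^ 3 + 168 * s ^ 5 - 60 * s ^ 7) / (35 * s) := by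
  change deriv^[1] psi (s ^ 2) = _
  rw [iter_deriv_psi_sq hs]
  norm_num [descPochhammer_succ_right]
  field_simp
  ring

lemma deriv_deriv_psi_sq :
    deriv (deriv psi) (s ^ 2) = -(16 + 140 * s ^ 3 - 336 * s ^ 5 + 180 * s ^ 7) / (35 * s ^ 3) := by
  change deriv^[2] psi (s ^ 2) = _
  rw [iter_deriv_psi_sq hs]
  norm_num [descPochhammer_succ_right, Nat.descFactorial]
  field_simp
  ring

lemma deriv_deriv_deriv_psi_sq :
    deriv (deriv (deriv psi)) (s ^ 2) = (24 + 336 * s ^ 5 - 360 * s ^ 7) / (35 * s ^ 5) := by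
  change deriv^[3] psi (s ^ 2) = _
  rw [iter_deriv_psi_sq hs]
  norm_num [descPochhammer_succ_right, Nat.descFactorial]
  field_simp
  ring

end

section
variable {s : ℝ} (hs₀ : 0 < s) (hs₁ : s < 1)
include hs₀ hs₁

lemma psi_sq_pos : 0 < psi (s ^ 2) := by
  have h : 64 - 70 * s ^ 3 + 56 * s ^ 5 - 15 * s ^ 7
      = 35 + 29 * (1 - s) + s * (1 - s) * (1 + s) * (15 * (s ^ 2 - 41 / 30) ^ 2 + 59 / 60) := by
    ring
  rw [psi_sq hs₀, h]
  have := sub_pos.2 hs₁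
  positivity

lemma deriv_psi_sq_pos : 0 < deriv psi (s ^ 2) := by
  have h : 32 - 140 * s ^ 3 + 168 * s ^ 5 - 60 * s ^ 7
      = (1 - s) ^ 3 * (60 * s ^ 4 + 180 * s ^ 3 + 192 * s ^ 2 + 96 * s + 32) := by ring
  rw [deriv_psi_sq hs₀, h]
  have := sub_pos.2 hs₁
  positivity

lemma deriv_deriv_psi_sq_neg : deriv (deriv psi) (s ^ 2) < 0 := by
  have h : 16 + 140 * s ^ 3 - 336 * s ^ 5 + 180 * s ^ 7
      = (1 - s) ^ 2 * (180 * s ^ 5 + 360 * s ^ 4 + 204 * s ^ 3 + 48 * s ^ 2 + 32 * s + 16) := by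
    ring
  rw [deriv_deriv_psi_sq hs₀, h, neg_div, neg_lt_zero]
  have := sub_pos.2 hs₁
  positivity

lemma deriv_deriv_deriv_psi_sq_pos : 0 < deriv (deriv (deriv psi)) (s ^ 2) := by
  have h : 24 + 336 * s ^ 5 - 360 * s ^ 7
      = (1 - s) * (24 + 24 * s + 24 * s ^ 2 + 24 * s ^ 3 + 24 * s ^ 4
          + 360 * s ^ 5 + 360 * s ^ 6) := by
    ring
  rw [deriv_deriv_deriv_psi_sq hs₀, h]
  have := sub_pos.2 hs₁
  positivity

end

theorem psi_signs_on_Ioo :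
    ∀ t ∈ Set.Ioo (0 : ℝ) 1,
      0 < psi t ∧ 0 < deriv psi t ∧ deriv (deriv psi) t < 0 ∧
        0 < deriv (deriv (deriv psi)) t := by
  rintro t ⟨ht₀, ht₁⟩
  have hs₀ : 0 < √t := sqrt_pos.2 ht₀
  have hs₁ : √t < 1 := (sqrt_lt' one_pos).2 (by simpa using ht₁)
  rw [← sq_sqrt ht₀.le]
  exact ⟨psi_sq_pos hs₀ hs₁, deriv_psi_sq_pos hs₀ hs₁, deriv_deriv_psi_sq_neg hs₀ hs₁,
    deriv_deriv_deriv_psi_sq_pos hs₀ hs₁⟩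
end

section
/- The function f(x₁, x₂) = ∫₁^{|x|} dt/√(t²-1), defined on the half-plane P₊ = {(x₁, x₂) ∈ ℝ² : x₂ > 2}, satisfies the minimal surface equation div(∇f/√(1+|∇f|²)) = 0 on P₊. -/
/-!
On `1 < ‖x‖` the integral is `f = arcosh ‖x‖`, so `∇f = x / (‖x‖ √(‖x‖² - 1))` and
`1 + |∇f|² = ‖x‖² / (‖x‖² - 1)`. Hence `∇f / √(1 + |∇f|²) = x / ‖x‖²`, the gradient of `log ‖x‖`,
whose divergence on `ℝⁿ \ {0}` is `(n - 2) / ‖x‖²`; it vanishes exactly in the plane.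
-/

/-- `f x = ∫₁^{|x|} dt / √(t² - 1)` (i.e. `arccosh |x|`). -/
noncomputable def catF (x : EuclideanSpace ℝ (Fin 2)) : ℝ :=
  ∫ t in (1 : ℝ)..‖x‖, (Real.sqrt (t ^ 2 - 1))⁻¹

/-- first partial derivative in direction `i` -/
noncomputable def pd (g : EuclideanSpace ℝ (Fin 2) → ℝ) (x : EuclideanSpace ℝ (Fin 2))
    (i : Fin 2) : ℝ :=
  fderiv ℝ g x (EuclideanSpace.single i 1)

open Real Set Filter Topology

theorem integral_inv_sqrt_sq_sub_one {r : ℝ} (hr : 1 ≤ r) :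
    ∫ t in (1 : ℝ)..r, (√(t ^ 2 - 1))⁻¹ = arcosh r := by
  have hcont : ContinuousOn arcosh (uIcc 1 r) :=
    continuousOn_arcosh.mono (by simpa [uIcc_of_le hr] using Icc_subset_Ici_self)
  have hderiv : ∀ t ∈ Ioo (min 1 r) (max 1 r), HasDerivAt arcosh (√(t ^ 2 - 1))⁻¹ t :=
    fun t ht => hasDerivAt_arcosh (by simpa [hr] using ht.1)
  rw [intervalIntegral.integral_eq_sub_of_hasDerivAt_of_le hr
      (by simpa [uIcc_of_le hr] using hcont) (fun t ht => hderiv t (by simpa [hr] using ht))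
      (intervalIntegral.intervalIntegrable_deriv_of_nonneg hcont hderiv fun _ _ => by positivity),
    arcosh_zero, sub_zero]

theorem catF_eq_arcosh_norm {y : EuclideanSpace ℝ (Fin 2)} (hy : 1 ≤ ‖y‖) :
    catF y = arcosh ‖y‖ :=
  integral_inv_sqrt_sq_sub_one hy

section InnerProductSpace

variable {E : Type*} [NormedAddCommGroup E] [InnerProductSpace ℝ E]

theorem hasFDerivAt_norm {x : E} (hx : x ≠ 0) :
    HasFDerivAt (‖·‖) (‖x‖⁻¹ • innerSL ℝ x) x := by
  have hx' : 0 < ‖x‖ := norm_pos_iff.mpr hx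
  have h := (hasDerivAt_sqrt (pow_pos hx' 2).ne').comp_hasFDerivAt x
    (hasStrictFDerivAt_norm_sq x).hasFDerivAt
  simp only [Function.comp_def, sqrt_sq (norm_nonneg _)] at h
  refine h.congr_fderiv ?_
  rw [← Nat.cast_smul_eq_nsmul ℝ, smul_smul, Nat.cast_ofNat]
  congr 1
  field_simp

theorem hasFDerivAt_arcosh_norm {x : E} (hx : 1 < ‖x‖) :
    HasFDerivAt (fun y : E => arcosh ‖y‖) ((‖x‖ * √(‖x‖ ^ 2 - 1))⁻¹ • innerSL ℝ x) x := by
  have h := (hasDerivAt_arcosh hx).comp_hasFDerivAt x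
    (hasFDerivAt_norm (norm_pos_iff.mp (one_pos.trans hx)))
  rwa [smul_smul, ← mul_inv, mul_comm] at h

end InnerProductSpace

section EuclideanSpace

variable {ι : Type*} [Fintype ι] [DecidableEq ι]

theorem fderiv_coord_div_norm_sq_single {x : EuclideanSpace ℝ ι} (hx : x ≠ 0) (i : ι) :
    fderiv ℝ (fun y : EuclideanSpace ℝ ι => y i / ‖y‖ ^ 2) x (EuclideanSpace.single i 1) =
      (‖x‖ ^ 2 - 2 * x i ^ 2) / (‖x‖ ^ 2) ^ 2 := by
  have hx' : ‖x‖ ^ 2 ≠ 0 := pow_ne_zero 2 (norm_ne_zero_iff.mpr hx)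
  have h := (EuclideanSpace.proj i).hasFDerivAt.mul
    ((hasDerivAt_inv hx').comp_hasFDerivAt x (hasStrictFDerivAt_norm_sq x).hasFDerivAt)
  rw [(h.congr_of_eventuallyEq (f₁ := fun y => y i / ‖y‖ ^ 2)
    (.of_forall fun y => div_eq_mul_inv _ _)).fderiv]
  simp only [PiLp.proj_apply, Function.comp_apply, add_apply, smul_apply, neg_apply,
    coe_innerSL_apply, EuclideanSpace.inner_single_right, PiLp.single_eq_same, neg_smul, smul_eq_mul,
    nsmul_eq_mul, Nat.cast_ofNat, conj_trivial]
  field_simp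
  ring

theorem sum_fderiv_coord_div_norm_sq_single {x : EuclideanSpace ℝ ι} (hx : x ≠ 0) :
    ∑ i, fderiv ℝ (fun y : EuclideanSpace ℝ ι => y i / ‖y‖ ^ 2) x (EuclideanSpace.single i 1) =
      (Fintype.card ι - 2) / ‖x‖ ^ 2 := by
  have hx' : ‖x‖ ^ 2 ≠ 0 := pow_ne_zero 2 (norm_ne_zero_iff.mpr hx)
  simp only [fderiv_coord_div_norm_sq_single hx, ← Finset.sum_div, Finset.sum_sub_distrib,
    ← Finset.mul_sum, ← EuclideanSpace.real_norm_sq_eq, Finset.sum_const, Finset.card_univ,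
    nsmul_eq_mul]
  field_simp

end EuclideanSpace

theorem pd_catF {y : EuclideanSpace ℝ (Fin 2)} (hy : 1 < ‖y‖) (i : Fin 2) :
    pd catF y i = y i / (‖y‖ * √(‖y‖ ^ 2 - 1)) := by
  have hloc : catF =ᶠ[𝓝 y] fun z => arcosh ‖z‖ := by
    filter_upwards [(isOpen_lt continuous_const continuous_norm).mem_nhds hy] with z hz
    exact catF_eq_arcosh_norm (le_of_lt hz)
  rw [pd, hloc.fderiv_eq, (hasFDerivAt_arcosh_norm hy).fderiv]
  simp [EuclideanSpace.inner_single_right, div_eq_inv_mul]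

theorem pd_catF_div_sqrt {y : EuclideanSpace ℝ (Fin 2)} (hy : 1 < ‖y‖) (i : Fin 2) :
    pd catF y i / √(1 + ∑ j, pd catF y j ^ 2) = y i / ‖y‖ ^ 2 := by
  have hs : 0 < √(‖y‖ ^ 2 - 1) := sqrt_pos.mpr (by nlinarith)
  have hs2 : √(‖y‖ ^ 2 - 1) ^ 2 = ‖y‖ ^ 2 - 1 := sq_sqrt (by nlinarith)
  have h1 : 1 + ∑ j, pd catF y j ^ 2 = (‖y‖ / √(‖y‖ ^ 2 - 1)) ^ 2 := by
    simp only [pd_catF hy, div_pow, ← Finset.sum_div, ← EuclideanSpace.real_norm_sq_eq]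
    field_simp
    rw [hs2]
    ring
  rw [h1, sqrt_sq (by positivity), pd_catF hy]
  field_simp

theorem catF_solves_mse :
    ∀ x : EuclideanSpace ℝ (Fin 2), 2 < x 1 →
      ∑ i : Fin 2,
        pd (fun y => pd catF y i /
          Real.sqrt (1 + ∑ j : Fin 2, (pd catF y j) ^ 2)) x i = 0 := by
  intro x hx
  have hx1 : 1 < ‖x‖ := by
    have hcoord : |x 1| ≤ ‖x‖ := by simpa using PiLp.norm_apply_le x 1
    linarith [le_abs_self (x 1)]
  have hloc : ∀ i : Fin 2, (fun y => pd catF y i / √(1 + ∑ j, pd catF y j ^ 2))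
      =ᶠ[𝓝 x] fun y => y i / ‖y‖ ^ 2 := fun i => by
    filter_upwards [(isOpen_lt continuous_const continuous_norm).mem_nhds hx1] with y hy
    exact pd_catF_div_sqrt hy i
  calc ∑ i, pd (fun y => pd catF y i / √(1 + ∑ j, pd catF y j ^ 2)) x i
      = ∑ i, fderiv ℝ (fun y : EuclideanSpace ℝ (Fin 2) => y i / ‖y‖ ^ 2) x
          (EuclideanSpace.single i 1) :=
        Finset.sum_congr rfl fun i _ => by rw [pd, (hloc i).fderiv_eq]
    _ = 0 := by
        rw [sum_fderiv_coord_div_norm_sq_single (norm_pos_iff.mp (one_pos.trans hx1))]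
        simp
end
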